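/- Suppose X, Y ∈ S^n_+, τ ≥ 0, κ ≥ 0 satisfy Tr(A_i X) = b_i τ for all i = 1,…,m, d_1 κ + Tr(B_1 Y) = 0, and Tr(B_j Y) = 0 for j = 2,…,ñ+1−m. Then the block-diagonal matrices X̂ = diag(X, τ) and Ŷ = diag(Y, κ) in S^{n+1} solve the sSDLCP: Â(X̂) + B̂(Ŷ) = 0, X̂ Ŷ = 0, and X̂, Ŷ ∈ S^{n+1}_+. -/

import Mathlib

open Matrix BigOperators

noncomputable section

/-- Real square matrices of size `k`. -/
abbrev Mat (k : ℕ) : Type := Matrix (Fin k) (Fin k) ℝ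

/-- `dgE P q` is the block-diagonal `(n+1) × (n+1)` matrix `diag(P, q)`. -/
def dgE {n : ℕ} (P : Mat n) (q : ℝ) : Mat (n + 1) :=
  Matrix.of fun i j =>
    if hi : (i : ℕ) < n then
      (if hj : (j : ℕ) < n then P ⟨i, hi⟩ ⟨j, hj⟩ else 0)
    else (if (j : ℕ) < n then 0 else q)

/-- Index type for `ℝ^{ñ₁}`, split as the first `m` coordinates, the next `n`
coordinates, and the last `ñ+1−m` (here `k`) coordinates; `ñ₁ = m + n + (ñ+1−m)`. -/
abbrev SIdx (n m k : ℕ) : Type := Fin m ⊕ Fin n ⊕ Fin k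

/-- The linear map `Â : S^{n+1} → ℝ^{ñ₁}` of the sSDLCP. -/
def Ahat {n m k : ℕ} (A : Fin m → Mat n) (b : Fin m → ℝ) (Xh : Mat (n + 1)) :
    SIdx n m k → ℝ
  | Sum.inl i => (dgE (A i) (-(b i)) * Xh).trace
  | Sum.inr (Sum.inl i) => Xh i.castSucc (Fin.last n)
  | Sum.inr (Sum.inr _) => 0

/-- The linear map `B̂ : S^{n+1} → ℝ^{ñ₁}` of the sSDLCP, where `dd` is the vector `d`. -/
def Bhat {n m k : ℕ} (B : Fin k → Mat n) (dd : Fin k → ℝ) (Yh : Mat (n + 1)) :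
    SIdx n m k → ℝ
  | Sum.inl _ => 0
  | Sum.inr (Sum.inl _) => 0
  | Sum.inr (Sum.inr j) => (dgE (B j) (dd j) * Yh).trace

/-! ### Auxiliary lemmas about `dgE` -/

section dgELemmas

variable {n : ℕ} (P P' : Mat n) (q q' : ℝ)

@[simp] lemma dgE_cc (i j : Fin n) : dgE P q i.castSucc j.castSucc = P i j := by
  simp [dgE, i.isLt, j.isLt]

@[simp] lemma dgE_cl (i : Fin n) : dgE P q i.castSucc (Fin.last n) = 0 := by
  simp [dgE, i.isLt]

@[simp] lemma dgE_lc (j : Fin n) : dgE P q (Fin.last n) j.castSucc = 0 := by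
  simp [dgE, j.isLt]

@[simp] lemma dgE_ll : dgE P q (Fin.last n) (Fin.last n) = q := by
  simp [dgE]

lemma dgE_mul : dgE P q * dgE P' q' = dgE (P * P') (q * q') := by
  ext i j
  induction i using Fin.lastCases with
  | last =>
    induction j using Fin.lastCases with
    | last => simp [mul_apply, Fin.sum_univ_castSucc]
    | cast j => simp [mul_apply, Fin.sum_univ_castSucc]
  | cast i =>
    induction j using Fin.lastCases with
    | last => simp [mul_apply, Fin.sum_univ_castSucc]
    | cast j => simp [mul_apply, Fin.sum_univ_castSucc]

lemma dgE_trace : (dgE P q).trace = P.trace + q := by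
  simp [Matrix.trace, Matrix.diag, Fin.sum_univ_castSucc]

lemma dgE_zero : dgE (0 : Mat n) 0 = 0 := by
  ext i j
  induction i using Fin.lastCases with
  | last =>
    induction j using Fin.lastCases with
    | last => simp
    | cast j => simp
  | cast i =>
    induction j using Fin.lastCases with
    | last => simp
    | cast j => simp

lemma dgE_mulVec (x : Fin (n+1) → ℝ) :
    ∀ i : Fin n, (dgE P q *ᵥ x) i.castSucc = (P *ᵥ (x ∘ Fin.castSucc)) i := by
  intro i; simp [mulVec, dotProduct, Fin.sum_univ_castSucc]

lemma dgE_posSemidef (hP : P.PosSemidef) (hq : 0 ≤ q) : (dgE P q).PosSemidef := by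
  refine PosSemidef.of_dotProduct_mulVec_nonneg ?_ ?_
  · have hs : ∀ i j, P j i = P i j := fun i j => by
      have := congrFun (congrFun hP.1 i) j
      simpa using this
    ext i j
    induction i using Fin.lastCases with
    | last => induction j using Fin.lastCases with
      | last => simp
      | cast j => simp
    | cast i => induction j using Fin.lastCases with
      | last => simp
      | cast j => simp [hs]
  · intro x
    have h0 := hP.dotProduct_mulVec_nonneg (x ∘ Fin.castSucc)
    have key : dotProduct (star x) (dgE P q *ᵥ x) =
        dotProduct (star (x ∘ Fin.castSucc)) (P *ᵥ (x ∘ Fin.castSucc))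
          + q * (x (Fin.last n) * x (Fin.last n)) := by
      simp only [dotProduct, Fin.sum_univ_castSucc, dgE_mulVec]
      simp [mulVec, dotProduct, Fin.sum_univ_castSucc, Finset.mul_sum, mul_comm, mul_assoc]
      ring
    rw [key]
    have := mul_self_nonneg (x (Fin.last n))
    positivity

end dgELemmas

/-! ### Frobenius norm and Gram matrix lemmas -/

section Frob

variable {n k : ℕ}

lemma frob_expand (W : Mat n) : (Wᵀ * W).trace = ∑ j, ∑ i, (W i j)^2 := by
  simp [Matrix.trace, Matrix.diag, Matrix.mul_apply, sq]

lemma frob_nonneg (W : Mat n) : 0 ≤ (Wᵀ * W).trace := by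
  rw [frob_expand]; positivity

lemma eq_zero_of_frob {W : Mat n} (hW : (Wᵀ * W).trace = 0) : W = 0 := by
  rw [frob_expand] at hW
  ext i j
  have h1 : ∀ p ∈ (Finset.univ : Finset (Fin n)), (0:ℝ) ≤ ∑ q, (W q p)^2 :=
    fun p _ => by positivity
  have h2 := (Finset.sum_eq_zero_iff_of_nonneg h1).mp hW j (Finset.mem_univ j)
  have h3 : ∀ q ∈ (Finset.univ : Finset (Fin n)), (0:ℝ) ≤ (W q j)^2 :=
    fun q _ => sq_nonneg _
  have h4 := (Finset.sum_eq_zero_iff_of_nonneg h3).mp h2 i (Finset.mem_univ i)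
  simpa using pow_eq_zero_iff (n := 2) (by norm_num) |>.mp h4

lemma trace_mul_sum_smul (M : Mat n) (c : Fin k → ℝ) (E : Fin k → Mat n) :
    (M * ∑ j, c j • E j).trace = ∑ j, c j * (M * E j).trace := by
  rw [Matrix.mul_sum, Matrix.trace_sum]
  simp [Matrix.mul_smul]

lemma gram_surjective {E : Fin k → Mat n} (hE : ∀ i, (E i).IsSymm)
    (hli : LinearIndependent ℝ E) (v : Fin k → ℝ) :
    ∃ c : Fin k → ℝ, ∀ i, ∑ j, (E i * E j).trace * c j = v i := by
  set G : Matrix (Fin k) (Fin k) ℝ := Matrix.of fun i j => (E i * E j).trace with hG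
  have hinj : Function.Injective G.mulVecLin := by
    rw [← LinearMap.ker_eq_bot, LinearMap.ker_eq_bot']
    intro c hc
    set W : Mat n := ∑ j, c j • E j with hW
    have hWs : Wᵀ = W := by
      rw [hW, Matrix.transpose_sum]
      exact Finset.sum_congr rfl fun j _ => by rw [Matrix.transpose_smul, hE j]
    have hWE : ∀ i, (W * E i).trace = 0 := by
      intro i
      have := congrFun hc i
      simp only [Matrix.mulVecLin_apply, Matrix.mulVec, dotProduct, Pi.zero_apply] at this
      calc (W * E i).trace = ∑ j, c j * (E i * E j).trace := by
            rw [hW, Matrix.sum_mul]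
            simp only [Matrix.smul_mul, Matrix.trace_sum, Matrix.trace_smul, smul_eq_mul]
            exact Finset.sum_congr rfl fun j _ => by
              rw [Matrix.trace_mul_comm (E j) (E i)]
          _ = 0 := by rw [← this]; exact Finset.sum_congr rfl fun j _ => mul_comm _ _
    have hWW : (W * W).trace = 0 := by
      rw [hW, trace_mul_sum_smul]
      · simp only [← hW]
        exact Finset.sum_eq_zero fun j _ => by rw [hWE j, mul_zero]
    have hW0 : W = 0 := eq_zero_of_frob (by rw [hWs, hWW])
    funext i
    exact Fintype.linearIndependent_iff.mp hli c (by rw [← hW, hW0]) i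
  have hsurj : Function.Surjective G.mulVecLin :=
    (LinearMap.injective_iff_surjective).mp hinj
  obtain ⟨c, hc⟩ := hsurj v
  refine ⟨c, fun i => ?_⟩
  have := congrFun hc i
  simpa [Matrix.mulVecLin_apply, Matrix.mulVec, dotProduct, hG] using this

end Frob

/-- If `X, Y ⪰ 0`, `τ, κ ≥ 0` satisfy `Tr(Aᵢ X) = bᵢ τ` for all `i`,
`d₁κ + Tr(B₁ Y) = 0` and `Tr(Bⱼ Y) = 0` for `j ≥ 2`, then `X̂ = diag(X, τ)` and
`Ŷ = diag(Y, κ)` solve the sSDLCP: `Â(X̂) + B̂(Ŷ) = 0`, `X̂ Ŷ = 0`, `X̂, Ŷ ⪰ 0`.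
(Here `ñ` is written `nt`; `B j` denotes `B_{j+1}`, so `B 0 = B₁`, and
`d = (d₁, 0, …, 0)`.) -/
theorem homogeneous_solution_gives_sSDLCP_solution
    (n m nt : ℕ) (hm1 : 1 ≤ m) (hmn : m ≤ nt) (hnt : nt = n * (n + 1) / 2)
    (A : Fin m → Mat n) (b : Fin m → ℝ)
    (B : Fin (nt - m + 1) → Mat n) (d1 : ℝ)
    (hAsymm : ∀ i, (A i).IsSymm) (hAli : LinearIndependent ℝ A)
    (hBsymm : ∀ j, (B j).IsSymm)
    (hd1 : d1 ≠ 0)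
    (hB1A : ∀ i, -(d1 * b i) + (B 0 * A i).trace = 0)
    (hBli : LinearIndependent ℝ (fun j : {j : Fin (nt - m + 1) // j ≠ 0} => B j.1))
    (hBspan : ∀ W : Mat n,
        W ∈ Submodule.span ℝ (B '' {j | j ≠ 0}) ↔
          (W.IsSymm ∧ ∀ i, (W * A i).trace = 0))
    (X Y : Mat n) (τ κ : ℝ)
    (hX : X.PosSemidef) (hY : Y.PosSemidef) (hτ : 0 ≤ τ) (hκ : 0 ≤ κ)
    (h1 : ∀ i, (A i * X).trace = b i * τ)
    (h2 : d1 * κ + (B 0 * Y).trace = 0)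
    (h3 : ∀ j, j ≠ 0 → (B j * Y).trace = 0) :
    (∀ idx, Ahat A b (dgE X τ) idx +
        Bhat B (fun j => if j = 0 then d1 else 0) (dgE Y κ) idx = 0) ∧
    dgE X τ * dgE Y κ = 0 ∧
    (dgE X τ).PosSemidef ∧ (dgE Y κ).PosSemidef := by
  -- Symmetry of X and Y
  have hXs : Xᵀ = X := by
    rw [← Matrix.conjTranspose_eq_transpose_of_trivial]; exact hX.1
  have hYs : Yᵀ = Y := by
    rw [← Matrix.conjTranspose_eq_transpose_of_trivial]; exact hY.1
  -- Step 1: `Y` lies in the span of the `Aᵢ`'s.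
  obtain ⟨c, hc⟩ := gram_surjective hAsymm hAli (fun i => (A i * Y).trace)
  set Pm : Mat n := ∑ j, c j • A j with hPm
  set Q : Mat n := Y - Pm with hQ
  have hPmA : ∀ i, (A i * Pm).trace = (A i * Y).trace := by
    intro i
    rw [hPm, trace_mul_sum_smul, ← hc i]
    exact Finset.sum_congr rfl fun j _ => mul_comm _ _
  have hQsymm : Q.IsSymm := by
    show Qᵀ = Q
    rw [hQ, Matrix.transpose_sub, hYs, hPm, Matrix.transpose_sum]
    congr 1
    exact Finset.sum_congr rfl fun j _ => by rw [Matrix.transpose_smul, hAsymm j]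
  have hQA : ∀ i, (Q * A i).trace = 0 := by
    intro i
    have hPmAi : (Pm * A i).trace = (Y * A i).trace := by
      rw [Matrix.trace_mul_comm, hPmA i, Matrix.trace_mul_comm]
    rw [hQ, Matrix.sub_mul, Matrix.trace_sub, hPmAi, sub_self]
  have hQmem : Q ∈ Submodule.span ℝ (B '' {j | j ≠ 0}) := (hBspan Q).2 ⟨hQsymm, hQA⟩
  -- The functional `W ↦ Tr(W Y)` vanishes on the span of the `Bⱼ`, `j ≠ 0`.
  have hkill : ∀ W ∈ Submodule.span ℝ (B '' {j | j ≠ 0}), (W * Y).trace = 0 := by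
    set L : Mat n →ₗ[ℝ] ℝ :=
      (Matrix.traceLinearMap (Fin n) ℝ ℝ).comp (LinearMap.mulRight ℝ Y) with hL
    have hle : Submodule.span ℝ (B '' {j | j ≠ 0}) ≤ LinearMap.ker L := by
      rw [Submodule.span_le]
      rintro _ ⟨j, hj, rfl⟩
      simpa [hL, LinearMap.mem_ker] using h3 j hj
    intro W hW
    have := hle hW
    simpa [hL, LinearMap.mem_ker] using this
  have hQY : (Q * Y).trace = 0 := hkill Q hQmem
  have hQPm : (Q * Pm).trace = 0 := by
    rw [hPm, trace_mul_sum_smul]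
    exact Finset.sum_eq_zero fun j _ => by rw [hQA j, mul_zero]
  have hQQ : (Q * Q).trace = 0 := by
    have h5 : Q * Y - Q * Pm = Q * Q := by rw [← Matrix.mul_sub, ← hQ]
    rw [← h5, Matrix.trace_sub, hQY, hQPm, sub_self]
  have hQ0 : Q = 0 := eq_zero_of_frob (by rw [show Qᵀ = Q from hQsymm, hQQ])
  have hYPm : Y = Pm := sub_eq_zero.mp (by rw [← hQ, hQ0])
  -- Step 2: compute the key traces.
  set s : ℝ := ∑ j, c j * b j with hsdef
  have trB0 : (B 0 * Y).trace = d1 * s := by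
    rw [hYPm, hPm, trace_mul_sum_smul, hsdef, Finset.mul_sum]
    refine Finset.sum_congr rfl fun j _ => ?_
    have hBj : (B 0 * A j).trace = d1 * b j := by have := hB1A j; linarith
    rw [hBj]; ring
  have hsκ : s = -κ := by
    have hprod : d1 * (κ + s) = 0 := by rw [trB0] at h2; linarith
    have := (mul_eq_zero.mp hprod).resolve_left hd1
    linarith
  have trYX : (Y * X).trace = s * τ := by
    rw [Matrix.trace_mul_comm, hYPm, hPm, trace_mul_sum_smul, hsdef, Finset.sum_mul]
    refine Finset.sum_congr rfl fun j _ => ?_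
    rw [Matrix.trace_mul_comm, h1 j]; ring
  -- Step 3: `Tr(YX) ≥ 0` via square roots, hence `Tr(YX) = 0` and `κτ = 0`.
  set R1 : Mat n := (open scoped MatrixOrder in CFC.sqrt X) with hR1
  set R2 : Mat n := (open scoped MatrixOrder in CFC.sqrt Y) with hR2
  have hR1m : R1 * R1 = X := by open scoped MatrixOrder in exact CFC.sqrt_mul_sqrt_self X hX.nonneg
  have hR2m : R2 * R2 = Y := by open scoped MatrixOrder in exact CFC.sqrt_mul_sqrt_self Y hY.nonneg
  have hR1s : R1ᵀ = R1 := by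
    rw [← Matrix.conjTranspose_eq_transpose_of_trivial]; open scoped MatrixOrder in exact (CFC.sqrt_nonneg X).posSemidef.1
  have hR2s : R2ᵀ = R2 := by
    rw [← Matrix.conjTranspose_eq_transpose_of_trivial]; open scoped MatrixOrder in exact (CFC.sqrt_nonneg Y).posSemidef.1
  set N : Mat n := R2 * R1 with hN
  have hNt : Nᵀ = R1 * R2 := by rw [hN, Matrix.transpose_mul, hR1s, hR2s]
  have htr : (Nᵀ * N).trace = (Y * X).trace := by
    rw [hNt, hN]
    calc (R1 * R2 * (R2 * R1)).trace
        = (R2 * R1 * (R1 * R2)).trace := Matrix.trace_mul_comm _ _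
      _ = (R2 * X * R2).trace := by
          rw [show R2 * R1 * (R1 * R2) = R2 * (R1 * R1) * R2 by noncomm_ring, hR1m]
      _ = (Y * X).trace := by rw [Matrix.trace_mul_cycle, hR2m]
  have hYXnonneg : 0 ≤ (Y * X).trace := htr ▸ frob_nonneg N
  have hκτ : κ * τ = 0 := by
    have h6 : (0:ℝ) ≤ κ * τ := mul_nonneg hκ hτ
    rw [trYX, hsκ] at hYXnonneg
    linarith
  have hYX0 : (Y * X).trace = 0 := by rw [trYX, hsκ]; linarith [hκτ]
  have hN0 : N = 0 := eq_zero_of_frob (htr.trans hYX0)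
  have hXY : X * Y = 0 := by
    rw [← hR1m, ← hR2m,
      show R1 * R1 * (R2 * R2) = R1 * (R1 * R2) * R2 by noncomm_ring, ← hNt, hN0]
    simp
  -- Conclusions
  refine ⟨?_, ?_, dgE_posSemidef X τ hX hτ, dgE_posSemidef Y κ hY hκ⟩
  · rintro (i | i | j)
    · show (dgE (A i) (-(b i)) * dgE X τ).trace + 0 = 0
      rw [dgE_mul, dgE_trace, h1 i]; ring
    · show dgE X τ i.castSucc (Fin.last n) + 0 = 0
      rw [dgE_cl]; ring
    · show 0 + (dgE (B j) (if j = 0 then d1 else 0) * dgE Y κ).trace = 0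
      rw [dgE_mul, dgE_trace]
      by_cases hj : j = 0
      · subst hj; rw [if_pos rfl]; linarith [h2]
      · rw [if_neg hj, h3 j hj]; ring
  · rw [dgE_mul, hXY, show τ * κ = 0 from by rw [mul_comm]; exact hκτ, dgE_zero]

end
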